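/- Let G and H be groups acting on U(1) and Z via homomorphisms ρ_G : G → Z₂ and ρ_H : H → Z₂, and give G × H the product action. For x ∈ H^m(G, Z₂) and y ∈ H^n(H, Z₂), the twisted Bockstein operation SQ¹ on G × H satisfies SQ¹(x × y) = SQ¹(x) × y + x × SQ¹(y), where × denotes the cohomology cross product. -/

import Mathlib

/-! The twist only changes the sign of the first face, so the twisted coboundary of an integer
cochain is `d̃f = df - 2 (ρ ∪ f)`, where `d` is the untwisted coboundary and `ρ` is read as a
`0/1`-valued integer 1-cochain. As `d` is a derivation of the cup product,
`d̃(x̃ × ỹ) - d̃x̃ × ỹ - (-1)ᵐ x̃ × d̃ỹ` is twice a defect which modulo 2 equals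
`ρ_H ∪ (x × y) + x × (ρ_H ∪ y)`: the twists by `ρ_G` cancel, while `ρ_H` enters at the first face
of `x × y` but only at the `m`-th face through `d̃ỹ`. For a homomorphism `ρ_H` and a cocycle `x`,
the cochain `ρ_H(g₁⋯gₘ) · x(g₁,…,gₘ)` is a cup-1 homotopy between `ρ_H ∪ x` and `x ∪ ρ_H`, so the
defect is the coboundary of `(ρ_H(g₁⋯gₘ) · x) × y`. -/

/-- Twisted inhomogeneous coboundary operator on integer-valued cochains, for the action of
`K` on `ℤ` by the sign `(-1)^{ρ(g)}`. -/
def dInt {K : Type*} [Group K] (ρ : K → ZMod 2) (n : ℕ) (f : (Fin n → K) → ℤ) :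
    (Fin (n + 1) → K) → ℤ :=
  fun g => (if ρ (g 0) = 1 then -1 else 1) * f (fun i => g i.succ)
    + ∑ j : Fin (n + 1), (-1 : ℤ) ^ ((j : ℕ) + 1) * f (Fin.contractNth j (· * ·) g)

/-- The mod-2 coboundary operator on `Z₂`-valued cochains. -/
def dMod2 {K : Type*} [Group K] (n : ℕ) (f : (Fin n → K) → ZMod 2) :
    (Fin (n + 1) → K) → ZMod 2 :=
  fun g => f (fun i => g i.succ) + ∑ j : Fin (n + 1), f (Fin.contractNth j (· * ·) g)

/-- Cross product of integer-valued cochains: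
`(x × y)((g₁,h₁),…,(g_{m+n},h_{m+n})) = x(g₁,…,g_m)·y(h_{m+1},…,h_{m+n})`. -/
def crossInt {G H : Type*} [Group G] [Group H] {m n : ℕ}
    (a : (Fin m → G) → ℤ) (b : (Fin n → H) → ℤ) : (Fin (m + n) → G × H) → ℤ :=
  fun g => a (fun i => (g (Fin.castAdd n i)).1) * b (fun i => (g (Fin.natAdd m i)).2)

/-- Cross product of `Z₂`-valued cochains. -/
def crossMod2 {G H : Type*} [Group G] [Group H] {m n : ℕ}
    (a : (Fin m → G) → ZMod 2) (b : (Fin n → H) → ZMod 2) :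
    (Fin (m + n) → G × H) → ZMod 2 :=
  fun g => a (fun i => (g (Fin.castAdd n i)).1) * b (fun i => (g (Fin.natAdd m i)).2)

namespace Fin

variable {α : Type*} (op : α → α → α) {m n : ℕ} (g : Fin (m + n + 1) → α)

theorem contractNth_castAdd_castAdd (i : Fin m) :
    (fun k => contractNth (Fin.cast (Nat.add_assoc m n 1).symm (castAdd (n + 1) i)) op g
      (castAdd n k)) =
      contractNth i.castSucc op
        (fun k => g (Fin.cast (Nat.add_right_comm m 1 n) (castAdd n k))) := by
  funext k
  rcases lt_trichotomy (k : ℕ) i with hk | hk | hk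
  · rw [contractNth_apply_of_lt _ _ _ _ (by simp [hk]), contractNth_apply_of_lt _ _ _ _ hk]
    rfl
  · rw [contractNth_apply_of_eq _ _ _ _ (by simp [hk]), contractNth_apply_of_eq _ _ _ _ hk]
    rfl
  · rw [contractNth_apply_of_gt _ _ _ _ (by simp [hk]), contractNth_apply_of_gt _ _ _ _ hk]
    rfl

theorem contractNth_castAdd_natAdd (i : Fin m) :
    (fun k => contractNth (Fin.cast (Nat.add_assoc m n 1).symm (castAdd (n + 1) i)) op g
      (natAdd m k)) =
      fun k => g (Fin.cast (Nat.add_right_comm m 1 n) (natAdd (m + 1) k)) := by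
  funext k
  rw [contractNth_apply_of_gt _ _ _ _ (by simp; omega)]
  exact congrArg g (Fin.ext (by simp; omega))

theorem contractNth_natAdd_castAdd (j : Fin (n + 1)) :
    (fun k => contractNth (Fin.cast (Nat.add_assoc m n 1).symm (natAdd m j)) op g
      (castAdd n k)) =
      fun k => g (Fin.cast (Nat.add_assoc m n 1).symm (castAdd (n + 1) k)) := by
  funext k
  rw [contractNth_apply_of_lt _ _ _ _ (by simp; omega)]
  rfl

theorem contractNth_natAdd_natAdd (j : Fin (n + 1)) :
    (fun k => contractNth (Fin.cast (Nat.add_assoc m n 1).symm (natAdd m j)) op g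
      (natAdd m k)) =
      contractNth j op (fun k => g (Fin.cast (Nat.add_assoc m n 1).symm (natAdd m k))) := by
  funext k
  rcases lt_trichotomy (k : ℕ) j with hk | hk | hk
  · rw [contractNth_apply_of_lt _ _ _ _ (by simp [hk]), contractNth_apply_of_lt _ _ _ _ hk]
    rfl
  · rw [contractNth_apply_of_eq _ _ _ _ (by simp [hk]), contractNth_apply_of_eq _ _ _ _ hk]
    rfl
  · rw [contractNth_apply_of_gt _ _ _ _ (by simp [hk]), contractNth_apply_of_gt _ _ _ _ hk]
    rfl

theorem sum_contractNth_castSucc {M : Type*} [AddCommMonoid M] {n : ℕ} (j : Fin n)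
    (u : Fin (n + 1) → M) :
    ∑ i, contractNth j.castSucc (· + ·) u i = ∑ i, u i := by
  have contract_eq : ∀ i, contractNth j.castSucc (· + ·) u i =
      u (j.succ.succAbove i) + if i = j then u j.succ else 0 := by
    intro i
    rcases lt_trichotomy (i : ℕ) j with hi | hi | hi
    · rw [contractNth_apply_of_lt _ _ _ _ hi]
      simp [succAbove, lt_def, Nat.lt_succ_of_lt hi, ne_of_val_ne hi.ne]
    · rw [contractNth_apply_of_eq _ _ _ _ hi]
      simp [succAbove, lt_def, Fin.ext hi]
    · rw [contractNth_apply_of_gt _ _ _ _ hi]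
      simp [succAbove, lt_def, ne_of_val_ne hi.ne', Nat.not_lt.mpr (Nat.succ_le_of_lt hi)]
  simp [contract_eq, Finset.sum_add_distrib, sum_univ_succAbove u j.succ, add_comm]

end Fin

namespace GroupCochain

variable {Γ K R : Type*} [CommRing R] {m n : ℕ}

def d [Group Γ] (n : ℕ) (f : (Fin n → Γ) → R) : (Fin (n + 1) → Γ) → R :=
  fun g => f (Fin.tail g) +
    ∑ j : Fin (n + 1), (-1) ^ ((j : ℕ) + 1) * f (Fin.contractNth j (· * ·) g)

def cup (a : (Fin m → Γ) → R) (b : (Fin n → Γ) → R) : (Fin (m + n) → Γ) → R :=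
  fun g => a (fun i => g (Fin.castAdd n i)) * b (fun i => g (Fin.natAdd m i))

def comap [Group Γ] [Group K] (φ : Γ →* K) (f : (Fin n → K) → R) : (Fin n → Γ) → R :=
  fun g => f (φ ∘ g)

def leftCup (c : Γ → R) (f : (Fin n → Γ) → R) : (Fin (n + 1) → Γ) → R :=
  fun g => c (g 0) * f (Fin.tail g)

def rightCup (f : (Fin n → Γ) → R) (c : Γ → R) : (Fin (n + 1) → Γ) → R :=
  fun g => f (Fin.init g) * c (g (Fin.last n))

def sumMul (c : Γ → R) (f : (Fin n → Γ) → R) : (Fin n → Γ) → R :=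
  fun g => (∑ i, c (g i)) * f g

theorem d_apply_eq_init [Group Γ] (f : (Fin n → Γ) → R) (g : Fin (n + 1) → Γ) :
    d n f g = f (Fin.tail g) + ∑ j : Fin n, (-1) ^ ((j : ℕ) + 1) *
      f (Fin.contractNth j.castSucc (· * ·) g) + (-1) ^ (n + 1) * f (Fin.init g) := by
  have contract_last : Fin.contractNth (Fin.last n) (· * ·) g = Fin.init g :=
    funext fun i => Fin.contractNth_apply_of_lt _ _ _ _ i.isLt
  simp only [d, Fin.sum_univ_castSucc, contract_last, Fin.val_last, Fin.val_castSucc, add_assoc]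

theorem d_cup [Group Γ] (a : (Fin m → Γ) → R) (b : (Fin n → Γ) → R) (g : Fin (m + n + 1) → Γ) :
    d (m + n) (cup a b) g =
      cup (d m a) b (fun j => g (Fin.cast (Nat.add_right_comm m 1 n) j)) +
        (-1) ^ m * cup a (d n b) (fun j => g (Fin.cast (Nat.add_assoc m n 1).symm j)) := by
  set P := fun j => g (Fin.cast (Nat.add_right_comm m 1 n) j)
  set Q := fun j => g (Fin.cast (Nat.add_assoc m n 1).symm j)
  have tail_front :
      Fin.tail (fun i => P (Fin.castAdd n i)) = fun i => Fin.tail g (Fin.castAdd n i) := rfl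
  have init_front :
      Fin.init (fun i => P (Fin.castAdd n i)) = fun i => Q (Fin.castAdd (n + 1) i) := rfl
  have tail_back : (fun i => Fin.tail g (Fin.natAdd m i)) = fun i => P (Fin.natAdd (m + 1) i) := by
    funext i; exact congrArg g (Fin.ext (by simp; omega))
  have tail_back' : Fin.tail (fun i => Q (Fin.natAdd m i)) = fun i => P (Fin.natAdd (m + 1) i) := by
    funext i; exact congrArg g (Fin.ext (by simp; omega))
  simp only [cup]
  -- the last face of `d a` cancels against the first face of `d b`
  rw [d_apply_eq_init (n := m), tail_front, init_front]
  simp only [d, cup]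
  rw [tail_back, tail_back', ← (finCongr (Nat.add_assoc m n 1).symm).sum_comp, Fin.sum_univ_add]
  simp only [finCongr_apply, Fin.contractNth_castAdd_castAdd, Fin.contractNth_castAdd_natAdd,
    Fin.contractNth_natAdd_castAdd, Fin.contractNth_natAdd_natAdd, Fin.val_cast, Fin.val_castAdd,
    Fin.val_natAdd, add_mul, mul_add, Finset.sum_mul, Finset.mul_sum, P, Q]
  ring_nf

theorem d_comap [Group Γ] [Group K] (φ : Γ →* K) (f : (Fin n → K) → R) :
    d n (comap φ f) = comap φ (d n f) := by
  funext g
  simp only [d, comap, Fin.comp_contractNth _ _ (map_mul φ)]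
  rfl

theorem map_d [Group Γ] {S : Type*} [CommRing S] (φ : R →+* S) (f : (Fin n → Γ) → R)
    (g : Fin (n + 1) → Γ) : φ (d n f g) = d n (φ ∘ f) g := by
  simp [d]

theorem leftCup_cup (c : Γ → R) (a : (Fin m → Γ) → R) (b : (Fin n → Γ) → R)
    (g : Fin (m + n + 1) → Γ) :
    leftCup c (cup a b) g =
      cup (leftCup c a) b (fun j => g (Fin.cast (Nat.add_right_comm m 1 n) j)) := by
  simp only [leftCup, cup, mul_assoc]
  congr 3
  funext i
  exact congrArg g (Fin.ext (by simp; omega))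

theorem cup_rightCup (a : (Fin m → Γ) → R) (c : Γ → R) (b : (Fin n → Γ) → R)
    (g : Fin (m + n + 1) → Γ) :
    cup (rightCup a c) b (fun j => g (Fin.cast (Nat.add_right_comm m 1 n) j)) =
      cup a (leftCup c b) (fun j => g (Fin.cast (Nat.add_assoc m n 1).symm j)) := by
  simp only [leftCup, cup, rightCup, mul_assoc]
  congr 3
  funext i
  exact congrArg g (Fin.ext (by simp; omega))

theorem d_sumMul [Group Γ] (c : Γ → R) (hc : ∀ x y, c (x * y) = c x + c y)
    (f : (Fin n → Γ) → R) (g : Fin (n + 1) → Γ) :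
    d n (sumMul c f) g = sumMul c (d n f) g - leftCup c f g + (-1) ^ n * rightCup f c g := by
  have sum_contract : ∀ j : Fin n,
      ∑ i, c (Fin.contractNth j.castSucc (· * ·) g i) = ∑ i, c (g i) := fun j => by
    have := Fin.sum_contractNth_castSucc j (c ∘ g)
    rwa [← Fin.comp_contractNth _ _ hc] at this
  have sum_mul_sum : ∑ j : Fin n, (-1) ^ ((j : ℕ) + 1) *
      ((∑ i, c (g i)) * f (Fin.contractNth j.castSucc (· * ·) g)) =
      (∑ i, c (g i)) *
        ∑ j : Fin n, (-1) ^ ((j : ℕ) + 1) * f (Fin.contractNth j.castSucc (· * ·) g) := by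
    rw [Finset.mul_sum]
    exact Finset.sum_congr rfl fun _ _ => by ring
  simp only [d_apply_eq_init, sumMul, leftCup, rightCup, sum_contract, Fin.tail, Fin.init]
  linear_combination sum_mul_sum - f (Fin.tail g) * Fin.sum_univ_succ (fun i => c (g i))
    - (-1) ^ (n + 1) * f (Fin.init g) * Fin.sum_univ_castSucc (fun i => c (g i))

theorem d_cup_sumMul [Group Γ] (c : Γ → R) (hc : ∀ x y, c (x * y) = c x + c y)
    (a : (Fin m → Γ) → R) (b : (Fin n → Γ) → R) (ha : d m a = 0) (hb : d n b = 0)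
    (g : Fin (m + n + 1) → Γ) :
    d (m + n) (cup (sumMul c a) b) g =
      (-1) ^ m * cup a (leftCup c b) (fun j => g (Fin.cast (Nat.add_assoc m n 1).symm j)) -
        cup (leftCup c a) b (fun j => g (Fin.cast (Nat.add_right_comm m 1 n) j)) := by
  rw [d_cup, hb, ← cup_rightCup]
  simp only [cup, d_sumMul c hc, ha, sumMul, Pi.zero_apply]
  ring

end GroupCochain

open GroupCochain

theorem dMod2_eq_d {K : Type*} [Group K] (n : ℕ) (f : (Fin n → K) → ZMod 2) :
    dMod2 n f = d n f := by
  funext g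
  simp [dMod2, d, Fin.tail_def, show (-1 : ZMod 2) = 1 from rfl]

theorem dMod2_comap {Γ K : Type*} [Group Γ] [Group K] (φ : Γ →* K) (n : ℕ)
    (f : (Fin n → K) → ZMod 2) : dMod2 n (comap φ f) = comap φ (dMod2 n f) := by
  rw [dMod2_eq_d, dMod2_eq_d, d_comap]

theorem dInt_eq_d_sub {K : Type*} [Group K] (ρ : K → ZMod 2) (n : ℕ) (f : (Fin n → K) → ℤ)
    (g : Fin (n + 1) → K) :
    dInt ρ n f g = d n f g - 2 * leftCup (fun k => ((ρ k).val : ℤ)) f g := by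
  have sign : ∀ z : ZMod 2, (if z = 1 then (-1 : ℤ) else 1) = 1 - 2 * z.val := by decide
  simp only [dInt, d, leftCup, sign, Fin.tail_def]
  ring

theorem dInt_comap {Γ K : Type*} [Group Γ] [Group K] (φ : Γ →* K) (ρ : K → ZMod 2) (n : ℕ)
    (f : (Fin n → K) → ℤ) : dInt (ρ ∘ φ) n (comap φ f) = comap φ (dInt ρ n f) := by
  funext g
  simp only [dInt, comap, Fin.comp_contractNth _ _ (map_mul φ)]
  rfl

theorem intCast_dInt {K : Type*} [Group K] (ρ : K → ZMod 2) (n : ℕ) (f : (Fin n → K) → ℤ)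
    (g : Fin (n + 1) → K) :
    (dInt ρ n f g : ZMod 2) = dMod2 n (fun h => (f h : ZMod 2)) g := by
  rw [dInt_eq_d_sub, dMod2_eq_d, Int.cast_sub, ← eq_intCast (Int.castRingHom (ZMod 2)), map_d]
  simp only [Int.cast_mul, Int.cast_ofNat, show (2 : ZMod 2) = 0 from rfl, zero_mul, sub_zero]
  rfl

theorem two_dvd_dInt_of_dMod2_eq_zero {K : Type*} [Group K] {ρ : K → ZMod 2} {n : ℕ}
    {f : (Fin n → K) → ℤ} (hf : dMod2 n (fun h => (f h : ZMod 2)) = 0) (g : Fin (n + 1) → K) :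
    2 ∣ dInt ρ n f g :=
  (ZMod.intCast_zmod_eq_zero_iff_dvd _ 2).mp (by rw [intCast_dInt, hf]; rfl)

def leibnizDefect {Γ : Type*} {m n : ℕ} (ρ ρ₁ ρ₂ : Γ → ZMod 2) (a : (Fin m → Γ) → ℤ)
    (b : (Fin n → Γ) → ℤ) (g : Fin (m + n + 1) → Γ) : ℤ :=
  leftCup (fun k => ((ρ₁ k).val - (ρ k).val : ℤ)) (cup a b) g +
    (-1) ^ m * cup a (leftCup (fun k => ((ρ₂ k).val : ℤ)) b)
      (fun j => g (Fin.cast (Nat.add_assoc m n 1).symm j))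

theorem dInt_cup {Γ : Type*} [Group Γ] {m n : ℕ} (ρ ρ₁ ρ₂ : Γ → ZMod 2) (a : (Fin m → Γ) → ℤ)
    (b : (Fin n → Γ) → ℤ) (g : Fin (m + n + 1) → Γ) :
    dInt ρ (m + n) (cup a b) g =
      cup (dInt ρ₁ m a) b (fun j => g (Fin.cast (Nat.add_right_comm m 1 n) j)) +
        (-1) ^ m * cup a (dInt ρ₂ n b) (fun j => g (Fin.cast (Nat.add_assoc m n 1).symm j)) +
        2 * leibnizDefect ρ ρ₁ ρ₂ a b g := by
  rw [leibnizDefect, dInt_eq_d_sub, d_cup, leftCup_cup, leftCup_cup]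
  simp only [cup, leftCup, dInt_eq_d_sub]
  ring

theorem intCast_leibnizDefect {Γ : Type*} [Group Γ] {m n : ℕ} (ρ ρ₁ ρ₂ : Γ → ZMod 2)
    (hρ : ∀ k, ρ k = ρ₁ k + ρ₂ k) (hρ₂ : ∀ x y, ρ₂ (x * y) = ρ₂ x + ρ₂ y)
    (a : (Fin m → Γ) → ℤ) (b : (Fin n → Γ) → ℤ)
    (ha : dMod2 m (fun h => (a h : ZMod 2)) = 0) (hb : dMod2 n (fun h => (b h : ZMod 2)) = 0)
    (g : Fin (m + n + 1) → Γ) :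
    (leibnizDefect ρ ρ₁ ρ₂ a b g : ZMod 2) =
      dMod2 (m + n) (cup (sumMul ρ₂ (fun h => (a h : ZMod 2))) (fun h => (b h : ZMod 2))) g := by
  rw [dMod2_eq_d] at ha hb ⊢
  rw [d_cup_sumMul ρ₂ hρ₂ _ _ ha hb, leibnizDefect, leftCup_cup]
  simp only [cup, leftCup, hρ]
  push_cast
  simp only [ZMod.natCast_val, ZMod.cast_id', id]
  ring

theorem crossInt_eq_cup {G H : Type*} [Group G] [Group H] {m n : ℕ} (a : (Fin m → G) → ℤ)
    (b : (Fin n → H) → ℤ) :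
    crossInt a b = cup (comap (MonoidHom.fst G H) a) (comap (MonoidHom.snd G H) b) :=
  rfl

theorem dInt_crossInt_eq_two_mul {G H : Type*} [Group G] [Group H] (ρG : G → ZMod 2)
    (ρH : H → ZMod 2) {m n : ℕ} (xt : (Fin m → G) → ℤ) (yt : (Fin n → H) → ℤ)
    (A : (Fin (m + 1) → G) → ℤ) (B : (Fin (n + 1) → H) → ℤ)
    (hA : ∀ h, dInt ρG m xt h = 2 * A h) (hB : ∀ h, dInt ρH n yt h = 2 * B h)
    (g : Fin (m + n + 1) → G × H) :
    dInt (fun p : G × H => ρG p.1 + ρH p.2) (m + n) (crossInt xt yt) g =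
      2 * (crossInt A yt (fun j => g (Fin.cast (Nat.add_right_comm m 1 n) j)) +
        (-1) ^ m * crossInt xt B (fun j => g (Fin.cast (Nat.add_assoc m n 1).symm j)) +
        leibnizDefect (fun p : G × H => ρG p.1 + ρH p.2) (ρG ∘ MonoidHom.fst G H)
          (ρH ∘ MonoidHom.snd G H) (comap (MonoidHom.fst G H) xt)
          (comap (MonoidHom.snd G H) yt) g) := by
  simp only [crossInt_eq_cup]
  rw [dInt_cup _ (ρG ∘ MonoidHom.fst G H) (ρH ∘ MonoidHom.snd G H), dInt_comap, dInt_comap]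
  simp only [cup, comap, hA, hB]
  ring

/-- let `ρ_G : G → Z₂`, `ρ_H : H → Z₂` twist the actions on `U(1)` and `ℤ`,
and give `G × H` the product twist `ρ(g,h) = ρ_G(g) + ρ_H(h)`.  For a `Z₂`-cocycle
`x ∈ Hᵐ(G, Z₂)` with integer lift `x̃` and a `Z₂`-cocycle `y ∈ Hⁿ(H, Z₂)` with integer lift
`ỹ`, the twisted Bockstein `SQ¹(z) = (1/2)·(twisted differential of a lift of z) mod 2`
satisfies `SQ¹(x × y) = SQ¹(x) × y + x × SQ¹(y)` as classes in `H^{m+n+1}(G × H, Z₂)`,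
i.e. the representative of `SQ¹(x × y)` (computed from the lift `x̃ × ỹ`) differs from
`SQ¹(x) × y + x × SQ¹(y)` by a coboundary. -/
theorem SQ1_cross_product {G H : Type*} [Group G] [Group H]
    (ρG : G → ZMod 2) (ρH : H → ZMod 2)
    (hρH : ∀ a b : H, ρH (a * b) = ρH a + ρH b)
    (m n : ℕ) (xt : (Fin m → G) → ℤ) (yt : (Fin n → H) → ℤ)
    (hx : dMod2 m (fun g => ((xt g : ℤ) : ZMod 2)) = 0)
    (hy : dMod2 n (fun h => ((yt h : ℤ) : ZMod 2)) = 0) :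
    (∀ g, (2 : ℤ) ∣ dInt ρG m xt g) ∧
    (∀ h, (2 : ℤ) ∣ dInt ρH n yt h) ∧
    (∀ g, (2 : ℤ) ∣ dInt (fun p : G × H => ρG p.1 + ρH p.2) (m + n) (crossInt xt yt) g) ∧
    ∃ μ : (Fin (m + n) → G × H) → ZMod 2,
      (fun g : Fin (m + n + 1) → G × H =>
          ((dInt (fun p : G × H => ρG p.1 + ρH p.2) (m + n) (crossInt xt yt) g / 2 : ℤ) :
            ZMod 2))
        = (fun g : Fin (m + n + 1) → G × H =>
            crossMod2 (fun h => ((dInt ρG m xt h / 2 : ℤ) : ZMod 2))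
              (fun h => ((yt h : ℤ) : ZMod 2))
              (fun j => g (Fin.cast (by omega : m + 1 + n = m + n + 1) j)))
          + (fun g : Fin (m + n + 1) → G × H =>
            crossMod2 (fun h => ((xt h : ℤ) : ZMod 2))
              (fun h => ((dInt ρH n yt h / 2 : ℤ) : ZMod 2))
              (fun j => g (Fin.cast (by omega : m + (n + 1) = m + n + 1) j)))
          + dMod2 (m + n) μ := by
  have hxt : ∀ h, 2 ∣ dInt ρG m xt h := two_dvd_dInt_of_dMod2_eq_zero hx
  have hyt : ∀ h, 2 ∣ dInt ρH n yt h := two_dvd_dInt_of_dMod2_eq_zero hy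
  have halve := dInt_crossInt_eq_two_mul ρG ρH xt yt _ _
    (fun h => (Int.mul_ediv_cancel' (hxt h)).symm) (fun h => (Int.mul_ediv_cancel' (hyt h)).symm)
  refine ⟨hxt, hyt, fun g => halve g ▸ dvd_mul_right _ _,
    cup (sumMul (ρH ∘ MonoidHom.snd G H) fun h => ((comap (MonoidHom.fst G H) xt h : ℤ) : ZMod 2))
      (fun h => ((comap (MonoidHom.snd G H) yt h : ℤ) : ZMod 2)), funext fun g => ?_⟩
  have hx' : dMod2 m (fun h => ((comap (MonoidHom.fst G H) xt h : ℤ) : ZMod 2)) = 0 :=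
    (dMod2_comap _ m _).trans (congrArg (comap _) hx)
  have hy' : dMod2 n (fun h => ((comap (MonoidHom.snd G H) yt h : ℤ) : ZMod 2)) = 0 :=
    (dMod2_comap _ n _).trans (congrArg (comap _) hy)
  rw [halve g, Int.mul_ediv_cancel_left _ two_ne_zero, Int.cast_add, Int.cast_add,
    intCast_leibnizDefect (fun p : G × H => ρG p.1 + ρH p.2) (ρG ∘ MonoidHom.fst G H)
      (ρH ∘ MonoidHom.snd G H) (fun _ => rfl) (fun x y => hρH x.2 y.2)
      (comap (MonoidHom.fst G H) xt) (comap (MonoidHom.snd G H) yt) hx' hy']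
  simp [crossInt, crossMod2, show (-1 : ZMod 2) = 1 from rfl]
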